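/- For the ECA rule 8, with local rule h(a,b,c) = ¬a ∧ b ∧ c, and for every n ≥ 5: if two block-sequential update schedules τ and τ' satisfy, for some cell i ∈ ℤ/nℤ, (1) lab_τ((i+1,i)) = lab_τ'((i+1,i)) = ⊕, (2) lab_τ((i−1,i)) ≠ lab_τ'((i−1,i)), and (3) lab_τ((j,j−1)) = lab_τ'((j,j−1)) for every j ∈ ℤ/nℤ, then f^{(τ)} ≠ f^{(τ')}, i.e. the two dynamics differ. -/

import Mathlib

/-- One round of a block-sequential update: all cells of rank `k` are updated
simultaneously by the ECA local rule `h`, reading the current states. -/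
def ecaStep (n : ℕ) (h : Bool → Bool → Bool → Bool) (τ : ZMod n → ℕ) (k : ℕ)
    (x : ZMod n → Bool) : ZMod n → Bool :=
  fun i => if τ i = k then h (x (i - 1)) (x i) (x (i + 1)) else x i

/-- State after processing ranks `0, 1, …, k` in increasing order. -/
def ecaUpTo (n : ℕ) (h : Bool → Bool → Bool → Bool) (τ : ZMod n → ℕ) :
    ℕ → (ZMod n → Bool) → ZMod n → Bool
  | 0 => ecaStep n h τ 0
  | k + 1 => fun x => ecaStep n h τ (k + 1) (ecaUpTo n h τ k x)

/-- Asynchronous global function `f^{(τ)}` for the block-sequential update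
schedule `τ : ZMod n → ℕ` (rank of each cell): a cell keeps the value it gets
in the round where it is updated (it is never updated again afterwards). -/
def ecaAsync (n : ℕ) (h : Bool → Bool → Bool → Bool) (τ : ZMod n → ℕ)
    (x : ZMod n → Bool) : ZMod n → Bool :=
  fun i => ecaUpTo n h τ (τ i) x i

/-- Synchronous global function of the ECA with local rule `h`. -/
def ecaSync (n : ℕ) (h : Bool → Bool → Bool → Bool) (x : ZMod n → Bool) :
    ZMod n → Bool :=
  fun i => h (x (i - 1)) (x i) (x (i + 1))

/-- Label of the arc `(i, j)` for schedule `τ`: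
`true` = ⊕ (τ i ≥ τ j), `false` = ⊖ (τ i < τ j). -/
def lab (n : ℕ) (τ : ZMod n → ℕ) (i j : ZMod n) : Bool :=
  decide (τ j ≤ τ i)

/-!
Take the configuration in which every cell is alive except `i - 3`. If cell `i` is updated no
later than both neighbours, it sees the live triple `1 1 1` and dies. If instead `i - 1` is
updated strictly before `i`, then `i - 1` dies first: its left neighbour `i - 2` is alive when it
is read, whether or not `i - 2` was updated before, since the dead cell `i - 3` keeps `i - 2`
alive. So cell `i` sees `0 1 1` and survives.
-/

lemma ZMod.natCast_ne_zero_of_lt {n m : ℕ} (hm : 0 < m) (hmn : m < n) : (m : ZMod n) ≠ 0 :=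
  fun h0 => hm.ne' (Nat.eq_zero_of_dvd_of_lt ((ZMod.natCast_eq_zero_iff m n).mp h0) hmn)

section Async

variable {n : ℕ} {h : Bool → Bool → Bool → Bool} {τ : ZMod n → ℕ} {x : ZMod n → Bool}

lemma ecaUpTo_of_lt_rank {k : ℕ} {j : ZMod n} (hk : k < τ j) : ecaUpTo n h τ k x j = x j := by
  induction k with
  | zero => simp only [ecaUpTo, ecaStep, hk.ne', if_false]
  | succ k ih => simp only [ecaUpTo, ecaStep, hk.ne', if_false, ih (by omega)]

lemma ecaUpTo_of_rank_le {k : ℕ} {j : ZMod n} (hk : τ j ≤ k) :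
    ecaUpTo n h τ k x j = ecaAsync n h τ x j := by
  induction k with
  | zero => rw [ecaAsync, Nat.le_zero.mp hk]
  | succ k ih =>
    rcases hk.lt_or_eq with hlt | heq
    · simp only [ecaUpTo, ecaStep, hlt.ne, if_false, ih (by omega)]
    · rw [ecaAsync, heq]

lemma ecaUpTo_eq_ite (k : ℕ) (j : ZMod n) :
    ecaUpTo n h τ k x j = if τ j ≤ k then ecaAsync n h τ x j else x j := by
  split_ifs with hk
  · exact ecaUpTo_of_rank_le hk
  · exact ecaUpTo_of_lt_rank (not_le.mp hk)

theorem ecaAsync_apply (j : ZMod n) :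
    ecaAsync n h τ x j =
      h (if τ (j - 1) < τ j then ecaAsync n h τ x (j - 1) else x (j - 1)) (x j)
        (if τ (j + 1) < τ j then ecaAsync n h τ x (j + 1) else x (j + 1)) := by
  rw [ecaAsync]
  cases hj : τ j with
  | zero => simp only [ecaUpTo, ecaStep, hj, if_true, Nat.not_lt_zero, if_false]
  | succ k =>
    simp only [ecaUpTo, ecaStep, hj, if_true, ecaUpTo_eq_ite, Nat.lt_succ_iff,
      Nat.not_succ_le_self, if_false]

lemma ecaUpTo_eq_false_of_dead (hh : ∀ a c, h a false c = false) {j : ZMod n}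
    (hx : x j = false) (k : ℕ) : ecaUpTo n h τ k x j = false := by
  induction k with
  | zero => simp only [ecaUpTo, ecaStep]; split <;> simp [hx, hh]
  | succ k ih => simp only [ecaUpTo, ecaStep]; split <;> simp [ih, hh]

lemma ecaAsync_eq_false_of_dead (hh : ∀ a c, h a false c = false) {j : ZMod n}
    (hx : x j = false) : ecaAsync n h τ x j = false :=
  ecaUpTo_eq_false_of_dead hh hx _

end Async

def rule8 (a b c : Bool) : Bool := !a && b && c

section Rule8

variable {n : ℕ} {τ : ZMod n → ℕ} {x : ZMod n → Bool}

lemma rule8_ecaAsync_eq_true_of_left_dead {j : ZMod n} (hl : x (j - 1) = false)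
    (hj : x j = true) (hr : x (j + 1) = true) (hτr : ¬ τ (j + 1) < τ j) :
    ecaAsync n rule8 τ x j = true := by
  have hl' : ecaAsync n rule8 τ x (j - 1) = false :=
    ecaAsync_eq_false_of_dead (fun _ _ => by simp [rule8]) hl
  rw [ecaAsync_apply, if_neg hτr, hj, hr]
  split <;> simp [rule8, hl, hl']

lemma rule8_ecaAsync_eq_false_of_alive {j : ZMod n} (hll : x (j - 1 - 1) = false)
    (hl : x (j - 1) = true) (hj : x j = true) (hr : x (j + 1) = true)
    (hτr : ¬ τ (j + 1) < τ j) : ecaAsync n rule8 τ x j = false := by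
  have hl' : (if τ (j - 1) < τ j then ecaAsync n rule8 τ x (j - 1) else x (j - 1)) = true := by
    split_ifs with hτl
    · exact rule8_ecaAsync_eq_true_of_left_dead hll hl (by rwa [sub_add_cancel])
        (by rw [sub_add_cancel]; omega)
    · exact hl
  rw [ecaAsync_apply, hl', if_neg hτr, hj, hr]
  rfl

end Rule8

lemma rule8_ecaAsync_ne_of_ranks {n : ℕ} (hn : 5 ≤ n) {τ τ' : ZMod n → ℕ} {i : ZMod n}
    (hτl : τ i ≤ τ (i - 1)) (hτr : τ i ≤ τ (i + 1))
    (hτ'l : τ' (i - 1) < τ' i) (hτ'r : τ' i ≤ τ' (i + 1)) :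
    ecaAsync n rule8 τ ≠ ecaAsync n rule8 τ' := by
  set x : ZMod n → Bool := fun j => decide (j ≠ i - 3)
  have hx3 : x (i - 1 - 1 - 1) = false := by
    simp [x, show i - 1 - 1 - 1 = i - 3 by ring]
  have alive : ∀ m : ℕ, 0 < m → m < n → ∀ j, j = i - 3 + m → x j = true := by
    rintro m hm hmn j rfl
    exact decide_eq_true fun h => ZMod.natCast_ne_zero_of_lt hm hmn (by linear_combination h)
  have hx2 : x (i - 1 - 1) = true := alive 1 (by omega) (by omega) _ (by push_cast; ring)
  have hx1 : x (i - 1) = true := alive 2 (by omega) (by omega) _ (by push_cast; ring)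
  have hx0 : x i = true := alive 3 (by omega) (by omega) _ (by push_cast; ring)
  have hxr : x (i + 1) = true := alive 4 (by omega) (by omega) _ (by push_cast; ring)
  have hτi : ecaAsync n rule8 τ x i = false := by
    rw [ecaAsync_apply, if_neg (not_lt.mpr hτl), if_neg (not_lt.mpr hτr), hx1, hx0, hxr]
    rfl
  have hτ'i : ecaAsync n rule8 τ' x i = true := by
    have hl : ecaAsync n rule8 τ' x (i - 1) = false :=
      rule8_ecaAsync_eq_false_of_alive hx3 hx2 hx1 (by rwa [sub_add_cancel])
        (by rw [sub_add_cancel]; omega)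
    rw [ecaAsync_apply, if_pos hτ'l, hl, if_neg (not_lt.mpr hτ'r), hx0, hxr]
    rfl
  intro heq
  simpa [hτi, hτ'i] using congrFun (congrFun heq x) i

theorem rule_8_neq_general (n : ℕ) (hn : 5 ≤ n) (τ τ' : ZMod n → ℕ) (i : ZMod n)
    (h1 : lab n τ (i + 1) i = true ∧ lab n τ' (i + 1) i = true)
    (h2 : lab n τ (i - 1) i ≠ lab n τ' (i - 1) i) :
    ecaAsync n (fun a b c => !a && b && c) τ ≠
      ecaAsync n (fun a b c => !a && b && c) τ' := by
  obtain ⟨hτr, hτ'r⟩ := h1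
  simp only [lab, decide_eq_true_eq] at hτr hτ'r
  by_cases hτl : τ i ≤ τ (i - 1)
  · have hτ'l : τ' (i - 1) < τ' i := not_le.mp fun h => h2 (by simp [lab, hτl, h])
    exact rule8_ecaAsync_ne_of_ranks hn hτl hτr hτ'l hτ'r
  · have hτ'l : τ' i ≤ τ' (i - 1) := by_contra fun h => h2 (by simp [lab, hτl, h])
    exact (rule8_ecaAsync_ne_of_ranks hn hτ'l hτ'r (not_le.mp hτl) hτr).symm

/-- Rule 8: if the arc $(i+1,i)$ is labeled ⊕ in both schedules, the label of
arc $(i-1,i)$ differs, and all counter-clockwise labels agree, then the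
dynamics differ. -/
theorem rule_8_neq (n : ℕ) (hn : 5 ≤ n) (τ τ' : ZMod n → ℕ) (i : ZMod n)
    (h1 : lab n τ (i + 1) i = true ∧ lab n τ' (i + 1) i = true)
    (h2 : lab n τ (i - 1) i ≠ lab n τ' (i - 1) i)
    (h3 : ∀ j : ZMod n, lab n τ j (j - 1) = lab n τ' j (j - 1)) :
    ecaAsync n (fun a b c => !a && b && c) τ ≠
      ecaAsync n (fun a b c => !a && b && c) τ' :=
  rule_8_neq_general n hn τ τ' i h1 h2
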